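/- arXiv:2106.14725 — 3 statements merged into one kernel-verified Lean document; each statement's English description precedes it below -/
import Mathlib

section
/- In $\mathbb{R}^{2,q}$, let $a = \langle e_{q+2} \rangle$, $d = \langle e_1 \rangle$, and let $x, y$ be isotropic lines with normalized spanning vectors $(q_J(\mathsf{s}_x), \mathsf{s}_x, 1)$ and $(q_J(\mathsf{s}_y), \mathsf{s}_y, 1)$ such that $\mathsf{s}_x \in c_J(V_J)$ and $\mathsf{s}_y - \mathsf{s}_x \in c_J(V_J)$. Then ${\rm cr}_1(a, x, y, d) = \frac{q_J(\mathsf{s}_y)}{q_J(\mathsf{s}_x)} > 1$. -/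
open Matrix

/-- The symmetric matrix `J` with `J_{0,q-1} = J_{q-1,0} = 1`, `J_{ii} = -1` for the
middle indices, and all other entries zero. -/
noncomputable def Jmat (q : ℕ) : Matrix (Fin q) (Fin q) ℝ :=
  Matrix.of fun i j =>
    if ((i : ℕ) = 0 ∧ (j : ℕ) = q - 1) ∨ ((i : ℕ) = q - 1 ∧ (j : ℕ) = 0) then 1
    else if i = j ∧ (i : ℕ) ≠ 0 ∧ (i : ℕ) ≠ q - 1 then -1 else 0

/-- The bilinear form `b_J(s,t) = (1/2) sᵀ J t`. -/
noncomputable def bJ (q : ℕ) (s t : Fin q → ℝ) : ℝ := (1 / 2) * (s ⬝ᵥ (Jmat q *ᵥ t))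

/-- The quadratic form `q_J(s) = b_J(s,s)`. -/
noncomputable def qJ (q : ℕ) (s : Fin q → ℝ) : ℝ := bJ q s s

/-- The open cone `c_J(V_J)` of positive vectors with positive first entry. -/
def inCJ (n : ℕ) (s : Fin (n + 1) → ℝ) : Prop := 0 < s 0 ∧ 0 < qJ (n + 1) s

/-- The partial closure `c̄_J(V_J)`: `q_J ≥ 0`, first entry still strictly positive. -/
def inCJbar (n : ℕ) (s : Fin (n + 1) → ℝ) : Prop := 0 < s 0 ∧ 0 ≤ qJ (n + 1) s

/-- Index type for `ℝ^{2,q}` in the block decomposition `⟨e₁⟩ ⊕ V_J ⊕ ⟨e_{q+2}⟩`. -/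
abbrev D2 (q : ℕ) := Fin 1 ⊕ (Fin q ⊕ Fin 1)

/-- The form `Q` of signature `(2,q)` with matrix `[[0,0,-1],[0,J,0],[-1,0,0]]`. -/
noncomputable def Q2 (q : ℕ) : Matrix (D2 q) (D2 q) ℝ :=
  Matrix.fromBlocks 0 (Matrix.fromCols 0 (-1)) (Matrix.fromRows 0 (-1))
    (Matrix.fromBlocks (Jmat q) 0 0 0)

/-- The vector `(a, s, c) ∈ ℝ^{2,q}`. -/
def vecMk (q : ℕ) (a : ℝ) (s : Fin q → ℝ) (c : ℝ) : D2 q → ℝ :=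
  Sum.elim (fun _ => a) (Sum.elim s fun _ => c)

/-- The bilinear form `Q(v,w)` on `ℝ^{2,q}`. -/
noncomputable def Qf (q : ℕ) (v w : D2 q → ℝ) : ℝ := v ⬝ᵥ (Q2 q *ᵥ w)

/-- The cross ratio of four isotropic lines in `ℝ^{2,q}`, expressed in terms of
spanning vectors:  `cr₁(V₁,W₁,W₂,V₂) = (Q(ṽ₁,w̃₂)/Q(ṽ₁,w̃₁)) (Q(ṽ₂,w̃₁)/Q(ṽ₂,w̃₂))`. -/
noncomputable def cr1Q (q : ℕ) (v1 w1 w2 v2 : D2 q → ℝ) : ℝ :=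
  (Qf q v1 w2 / Qf q v1 w1) * (Qf q v2 w1 / Qf q v2 w2)

/-- The unipotent element `E₁(s)` for `p = 2`. -/
noncomputable def E1 (q : ℕ) (s : Fin q → ℝ) : Matrix (D2 q) (D2 q) ℝ :=
  Matrix.fromBlocks 1
    (Matrix.fromCols (Matrix.of fun _ j => s j) (Matrix.of fun _ _ => qJ q s))
    0 (Matrix.fromBlocks 1 (Matrix.of fun i _ => (Jmat q *ᵥ s) i) 0 1)

/-!
Evaluating `Q` on the normalized vectors, the four entries of the cross ratio are `-1`, `-1`,
`-q_J(s_x)` and `-q_J(s_y)`, so it equals `q_J(s_y) / q_J(s_x)`. Writing `s_y = s_x + (s_y - s_x)`,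
`q_J(s_y) = q_J(s_x) + q_J(s_y - s_x) + 2 b_J(s_x, s_y - s_x)`, and `b_J` is positive on pairs of
vectors of the cone `c_J(V_J)`: in coordinates `2 b_J(s, t) = s₀ t_last + s_last t₀ - ⟨s_mid, t_mid⟩`,
and the Cauchy–Schwarz and AM–GM inequalities bound `⟨s_mid, t_mid⟩` strictly by the first two terms.
-/

lemma Jmat_symm (q : ℕ) : (Jmat q)ᵀ = Jmat q := by
  ext i j
  simp only [Jmat, transpose_apply, of_apply, Fin.ext_iff]
  split_ifs <;> first | rfl | omega

lemma bJ_comm (q : ℕ) (s t : Fin q → ℝ) : bJ q s t = bJ q t s := by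
  rw [bJ, bJ, dotProduct_mulVec, ← mulVec_transpose, Jmat_symm, dotProduct_comm]

lemma qJ_add (q : ℕ) (s t : Fin q → ℝ) :
    qJ q (s + t) = qJ q s + qJ q t + 2 * bJ q s t := by
  have hts := bJ_comm q t s
  simp only [qJ, bJ, mulVec_add, dotProduct_add, add_dotProduct] at hts ⊢
  linarith

lemma Jmat_row (n : ℕ) (i : Fin (n + 2)) :
    Jmat (n + 2) i = if i = 0 then Pi.single (Fin.last _) 1
      else if i = Fin.last _ then Pi.single 0 1 else Pi.single i (-1) := by
  ext j
  split_ifs <;>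
    simp only [Jmat, of_apply, Pi.single_apply, Fin.ext_iff, Fin.val_last, Fin.val_zero] at * <;>
    split_ifs <;> first | rfl | omega

lemma Jmat_mulVec_apply (n : ℕ) (t : Fin (n + 2) → ℝ) (i : Fin (n + 2)) :
    (Jmat (n + 2) *ᵥ t) i =
      if i = 0 then t (Fin.last _) else if i = Fin.last _ then t 0 else -t i := by
  rw [mulVec, Jmat_row]
  split_ifs <;> simp [single_dotProduct]

lemma two_mul_bJ (n : ℕ) (s t : Fin (n + 2) → ℝ) :
    2 * bJ (n + 2) s t = s 0 * t (Fin.last _) + s (Fin.last _) * t 0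
      - ∑ i : Fin n, s i.castSucc.succ * t i.castSucc.succ := by
  simp only [bJ, dotProduct, Jmat_mulVec_apply, Fin.sum_univ_succ (n := n + 1),
    Fin.sum_univ_castSucc (n := n)]
  have hmid (i : Fin n) : i.castSucc.succ ≠ Fin.last _ := by simp [Fin.ext_iff, i.isLt.ne]
  simp only [one_div, ↓reduceIte, Fin.succ_ne_zero, hmid, mul_neg, Finset.sum_neg_distrib,
    Fin.succ_last, Nat.succ_eq_add_one, Fin.last_eq_zero_iff, Nat.add_eq_zero_iff, one_ne_zero,
    and_false, ne_eq, OfNat.ofNat_ne_zero, not_false_eq_true, mul_inv_cancel_left₀]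
  ring

lemma two_mul_bJ_one (s t : Fin 1 → ℝ) : 2 * bJ 1 s t = s 0 * t 0 := by
  simp [bJ, Jmat, dotProduct, mulVec]

/-- Reverse Cauchy–Schwarz for the Lorentzian form `2ab - ∑ uᵢ²`. -/
lemma sum_mul_lt_of_sum_mul_self_lt {ι : Type*} (S : Finset ι) (u v : ι → ℝ) {a b c d : ℝ}
    (ha : 0 < a) (hc : 0 < c) (hu : ∑ i ∈ S, u i * u i < 2 * a * b)
    (hv : ∑ i ∈ S, v i * v i < 2 * c * d) :
    ∑ i ∈ S, u i * v i < a * d + b * c := by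
  have hU : 0 ≤ ∑ i ∈ S, u i * u i := Finset.sum_nonneg fun i _ => mul_self_nonneg (u i)
  have hV : 0 ≤ ∑ i ∈ S, v i * v i := Finset.sum_nonneg fun i _ => mul_self_nonneg (v i)
  have hb : 0 < b := pos_of_mul_pos_right (hU.trans_lt hu) (by positivity)
  have hd : 0 < d := pos_of_mul_pos_right (hV.trans_lt hv) (by positivity)
  refine abs_lt_of_sq_lt_sq' ?_ (by positivity) |>.2
  calc (∑ i ∈ S, u i * v i) ^ 2 ≤ (∑ i ∈ S, u i * u i) * ∑ i ∈ S, v i * v i := by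
        simpa only [sq] using Finset.sum_mul_sq_le_sq_mul_sq S u v
    _ < (2 * a * b) * (2 * c * d) := mul_lt_mul'' hu hv hU hV
    _ ≤ (a * d + b * c) ^ 2 := by nlinarith [sq_nonneg (a * d - b * c)]

lemma bJ_pos_of_inCJ (n : ℕ) {s t : Fin (n + 1) → ℝ} (hs : inCJ n s) (ht : inCJ n t) :
    0 < bJ (n + 1) s t := by
  obtain ⟨hs0, hsq⟩ := hs
  obtain ⟨ht0, htq⟩ := ht
  rcases n with _ | n
  · nlinarith [two_mul_bJ_one s t, mul_pos hs0 ht0]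
  · rw [qJ, ← mul_pos_iff_of_pos_left two_pos, two_mul_bJ] at hsq htq
    have hmid := sum_mul_lt_of_sum_mul_self_lt Finset.univ (fun i : Fin n => s i.castSucc.succ)
      (fun i => t i.castSucc.succ) (b := s (Fin.last _)) (d := t (Fin.last _)) hs0 ht0
      (by linarith) (by linarith)
    linarith [two_mul_bJ n s t]

lemma Qf_vecMk (q : ℕ) (a c a' c' : ℝ) (s s' : Fin q → ℝ) :
    Qf q (vecMk q a s c) (vecMk q a' s' c') = s ⬝ᵥ (Jmat q *ᵥ s') - a * c' - c * a' := by
  simp [Qf, Q2, vecMk, fromBlocks_mulVec, fromRows_mulVec, neg_mulVec, dotProduct]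
  ring

/-- For `a = ⟨e_{q+2}⟩`, `d = ⟨e₁⟩` and isotropic lines `x, y` with normalized spanning
vectors `(q_J(s_x), s_x, 1)`, `(q_J(s_y), s_y, 1)` such that `s_x ∈ c_J(V_J)` and
`s_y - s_x ∈ c_J(V_J)`, one has `cr₁(a,x,y,d) = q_J(s_y)/q_J(s_x) > 1`. -/
theorem stmt_11 (n : ℕ) (sx sy : Fin (n + 1) → ℝ)
    (hx : inCJ n sx) (hyx : inCJ n (sy - sx)) :
    cr1Q (n + 1) (vecMk (n + 1) 0 0 1) (vecMk (n + 1) (qJ (n + 1) sx) sx 1)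
        (vecMk (n + 1) (qJ (n + 1) sy) sy 1) (vecMk (n + 1) 1 0 0)
      = qJ (n + 1) sy / qJ (n + 1) sx ∧
    1 < qJ (n + 1) sy / qJ (n + 1) sx := by
  have hqx : 0 < qJ (n + 1) sx := hx.2
  have hlt : qJ (n + 1) sx < qJ (n + 1) sy := by
    have key := qJ_add (n + 1) sx (sy - sx)
    rw [add_sub_cancel] at key
    linarith [hyx.2, bJ_pos_of_inCJ n hx hyx]
  refine ⟨?_, (one_lt_div hqx).2 hlt⟩
  simp only [cr1Q, Qf_vecMk, zero_dotProduct]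
  field_simp [hqx.ne', (hqx.trans hlt).ne']
  ring
end

section
/- Let $g$ be a $k$-proximal element (acting on isotropic $k$-planes of $\mathbb{R}^{p,q}$) represented by a diagonalizable matrix $\tilde g \in \mathsf{O}(p,q)$ with eigenvalues $|\lambda_1| \geq \cdots \geq |\lambda_{p+q}|$ and $|\lambda_k| > |\lambda_{k+1}|$, with attracting isotropic $k$-plane $g_+^k$ (spanned by eigenvectors for $\lambda_1,\ldots,\lambda_k$) and repelling $k$-plane $g_-^k$ (spanned by eigenvectors for $\lambda_{p+q-k+1},\ldots,\lambda_{p+q}$). Then for any isotropic $k$-plane $x^k$ transverse to both $g_+^k$ and $g_-^k$ and such that $g x^k$ is transverse to $g_\pm^k$: ${\rm cr}_k(g_-^k, x^k, g x^k, g_+^k) = \lambda_1^2 \cdots \lambda_k^2$. -/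
open Matrix



/-- `wedge A B` is the determinant of the matrix whose first `k` columns are the columns
of `A` (a basis of a `k`-plane `V`) and whose last `m` columns are the columns of `B`
(a basis of `W^⊥`), i.e. the number `V ∧ W^⊥` for the fixed identification of the top
exterior power with `ℝ` given by the standard basis. -/
noncomputable def wedge (k m : ℕ) (A : Matrix (Fin (k + m)) (Fin k) ℝ)
    (B : Matrix (Fin (k + m)) (Fin m) ℝ) : ℝ :=
  ((Matrix.fromCols A B).submatrix id finSumFinEquiv.symm).det

/-- The cross ratio `cr_k(V₁,W₁,W₂,V₂)`, computed from basis matrices `A₁, A₂` of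
`V₁, V₂` and basis matrices `B₁, B₂` of `W₁^⊥, W₂^⊥`:
`cr_k = (V₁∧W₂^⊥ / V₁∧W₁^⊥) · (V₂∧W₁^⊥ / V₂∧W₂^⊥)`. -/
noncomputable def crk (k m : ℕ) (A1 : Matrix (Fin (k + m)) (Fin k) ℝ)
    (B1 B2 : Matrix (Fin (k + m)) (Fin m) ℝ) (A2 : Matrix (Fin (k + m)) (Fin k) ℝ) : ℝ :=
  (wedge k m A1 B2 / wedge k m A1 B1) * (wedge k m A2 B1 / wedge k m A2 B2)

/-- The columns of a matrix are linearly independent (so it is a basis matrix of its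
column span). -/
def colsIndep {d r : ℕ} (M : Matrix (Fin d) (Fin r) ℝ) : Prop :=
  LinearIndependent ℝ fun j : Fin r => fun i : Fin d => M i j

lemma wedge_diag_left (k m : ℕ) (A : Matrix (Fin (k + m)) (Fin k) ℝ)
    (B : Matrix (Fin (k + m)) (Fin m) ℝ) (ν : Fin k → ℝ) :
    wedge k m (A * Matrix.diagonal ν) B = (∏ j, ν j) * wedge k m A B := by
  have h : Matrix.fromCols (A * Matrix.diagonal ν) B
      = Matrix.fromCols A B *
        Matrix.fromBlocks (Matrix.diagonal ν) 0 0 (1 : Matrix (Fin m) (Fin m) ℝ) := by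
    rw [Matrix.fromCols_mul_fromBlocks]; simp
  unfold wedge
  rw [h, ← Matrix.submatrix_mul_equiv (Matrix.fromCols A B) _ id finSumFinEquiv.symm _,
    Matrix.det_mul, Matrix.det_submatrix_equiv_self, Matrix.det_fromBlocks_zero₂₁,
    Matrix.det_diagonal, Matrix.det_one, mul_one, mul_comm]

lemma wedge_mul_left (k m : ℕ) (g : Matrix (Fin (k + m)) (Fin (k + m)) ℝ)
    (A : Matrix (Fin (k + m)) (Fin k) ℝ) (B : Matrix (Fin (k + m)) (Fin m) ℝ) :
    wedge k m (g * A) (g * B) = g.det * wedge k m A B := by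
  have h : Matrix.fromCols (g * A) (g * B) = g * Matrix.fromCols A B :=
    (Matrix.mul_fromCols g A B).symm
  unfold wedge
  rw [h]
  have h2 : ∀ M : Matrix (Fin (k + m)) (Fin k ⊕ Fin m) ℝ,
      (g * M).submatrix id finSumFinEquiv.symm
      = g * M.submatrix id finSumFinEquiv.symm := by
    intro M; ext i j
    simp [Matrix.mul_apply, Matrix.submatrix_apply]
  rw [h2, Matrix.det_mul]


/-- For a `k`-proximal diagonalizable `g = P (diag λ) P⁻¹ ∈ O(p,q)` with
`|λ₀| ≥ ⋯ ≥ |λ_{d-1}|`, `|λ_{k-1}| > |λ_k|`, and `λ_i λ_{d-1-i} = 1`, attracting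
isotropic `k`-plane `g₊` spanned by the first `k` columns of `P` and repelling `k`-plane
`g₋` spanned by the last `k` columns: for any isotropic `k`-plane `x` (with basis matrix
`X` and `X^⊥`-basis matrix `B`) such that `x` and `gx` are transverse to `g₊` and `g₋`,
`cr_k(g₋, x, gx, g₊) = λ₀² ⋯ λ_{k-1}²`. -/
theorem stmt_18 (k m : ℕ) (hk : 0 < k) (hm : 0 < m)
    (Qm : Matrix (Fin (k + m)) (Fin (k + m)) ℝ) (hQ : Qmᵀ = Qm) (hQnd : IsUnit Qm.det)
    (g P : Matrix (Fin (k + m)) (Fin (k + m)) ℝ) (hP : IsUnit P.det)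
    (lam : Fin (k + m) → ℝ)
    (hgiso : gᵀ * Qm * g = Qm)
    (hdiag : g = P * Matrix.diagonal lam * P⁻¹)
    (hmono : Antitone fun i => |lam i|)
    (hgap : |lam ⟨k, by omega⟩| < |lam ⟨k - 1, by omega⟩|)
    (hpair : ∀ i : Fin (k + m), lam i * lam i.rev = 1)
    (hplusiso : (Matrix.of fun i (j : Fin k) => P i ⟨(j : ℕ), by omega⟩)ᵀ * Qm *
        (Matrix.of fun i (j : Fin k) => P i ⟨(j : ℕ), by omega⟩) = 0)
    (hminusiso : (Matrix.of fun i (j : Fin k) => P i ⟨m + (j : ℕ), by omega⟩)ᵀ * Qm *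
        (Matrix.of fun i (j : Fin k) => P i ⟨m + (j : ℕ), by omega⟩) = 0)
    (X : Matrix (Fin (k + m)) (Fin k) ℝ) (hXiso : Xᵀ * Qm * X = 0) (hXi : colsIndep X)
    (B : Matrix (Fin (k + m)) (Fin m) ℝ) (hBi : colsIndep B)
    (hBperp : Xᵀ * Qm * B = 0)
    (htm1 : wedge k m (Matrix.of fun i (j : Fin k) => P i ⟨m + (j : ℕ), by omega⟩) B ≠ 0)
    (htm2 : wedge k m (Matrix.of fun i (j : Fin k) => P i ⟨m + (j : ℕ), by omega⟩) (g * B) ≠ 0)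
    (htp1 : wedge k m (Matrix.of fun i (j : Fin k) => P i ⟨(j : ℕ), by omega⟩) B ≠ 0)
    (htp2 : wedge k m (Matrix.of fun i (j : Fin k) => P i ⟨(j : ℕ), by omega⟩) (g * B) ≠ 0) :
    crk k m (Matrix.of fun i (j : Fin k) => P i ⟨m + (j : ℕ), by omega⟩) B (g * B)
        (Matrix.of fun i (j : Fin k) => P i ⟨(j : ℕ), by omega⟩) =
      ∏ j : Fin k, (lam ⟨(j : ℕ), by omega⟩) ^ 2 := by
  set Ap : Matrix (Fin (k + m)) (Fin k) ℝ :=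
    Matrix.of fun i (j : Fin k) => P i ⟨(j : ℕ), by omega⟩ with hAp
  set Am : Matrix (Fin (k + m)) (Fin k) ℝ :=
    Matrix.of fun i (j : Fin k) => P i ⟨m + (j : ℕ), by omega⟩ with hAm
  have hgP : g * P = P * Matrix.diagonal lam := by
    rw [hdiag, Matrix.mul_assoc, Matrix.nonsing_inv_mul P hP, Matrix.mul_one]
  -- action on eigencolumn matrices
  have hcol : ∀ (f : Fin k → Fin (k + m)),
      g * (Matrix.of fun i (j : Fin k) => P i (f j))
        = (Matrix.of fun i (j : Fin k) => P i (f j)) * Matrix.diagonal (fun j => lam (f j)) := by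
    intro f
    ext i j
    rw [Matrix.mul_diagonal]
    have h1 : (g * P) i (f j) = (P * Matrix.diagonal lam) i (f j) := by rw [hgP]
    rw [Matrix.mul_diagonal] at h1
    simpa [Matrix.mul_apply] using h1
  have hgAp : g * Ap = Ap * Matrix.diagonal (fun j : Fin k => lam ⟨(j : ℕ), by omega⟩) :=
    hcol fun j => ⟨(j : ℕ), by omega⟩
  have hgAm : g * Am = Am * Matrix.diagonal (fun j : Fin k => lam ⟨m + (j : ℕ), by omega⟩) :=
    hcol fun j => ⟨m + (j : ℕ), by omega⟩
  set pp : ℝ := ∏ j : Fin k, lam ⟨(j : ℕ), by omega⟩ with hpp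
  set pm : ℝ := ∏ j : Fin k, lam ⟨m + (j : ℕ), by omega⟩ with hpmdef
  -- key relations
  have r2 : pp * wedge k m Ap (g * B) = g.det * wedge k m Ap B := by
    rw [← wedge_mul_left k m g Ap B, hgAp, wedge_diag_left]
  have r1 : pm * wedge k m Am (g * B) = g.det * wedge k m Am B := by
    rw [← wedge_mul_left k m g Am B, hgAm, wedge_diag_left]
  -- pairing: pm * pp = 1
  have hrevmk : ∀ j : Fin k,
      (⟨m + (j : ℕ), by omega⟩ : Fin (k + m)).rev = ⟨k - 1 - (j : ℕ), by omega⟩ := by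
    intro j
    ext
    simp only [Fin.val_rev]
    omega
  have h3 : pm * pp = 1 := by
    have hrev : pp = ∏ j : Fin k, lam ⟨k - 1 - (j : ℕ), by omega⟩ := by
      rw [hpp]
      exact Fintype.prod_equiv Fin.revPerm _ _ (fun x => by
        congr 1
        ext
        simp only [Fin.revPerm_apply, Fin.val_rev]
        omega)
    rw [hrev, hpmdef, ← Finset.prod_mul_distrib]
    rw [Finset.prod_eq_one]
    intro j _
    have := hpair ⟨m + (j : ℕ), by omega⟩
    rwa [hrevmk j] at this
  -- finish
  rw [crk, show (∏ j : Fin k, lam ⟨(j : ℕ), by omega⟩ ^ 2) = pp ^ 2 by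
    rw [hpp, ← Finset.prod_pow]]
  have hb2 := htp2
  have hb1 := htp1
  have ha2 := htm2
  have ha1 := htm1
  field_simp
  linear_combination (wedge k m Ap B * pp) * r1 - (wedge k m Am B * pp) * r2 -
    (wedge k m Am (g * B) * wedge k m Ap B) * h3
end

section
/- Let $(V_1, W_1, W_2, V_2)$ be a transverse quadruple of isotropic $k$-planes in $\mathbb{R}^{p,q}$ with $\dim(V_1 \cap V_2) = k - 1$. Set $V = V_1 \cap V_2$, $V_+ = V_1 + V_2$ (a $(k+1)$-dimensional space), and let $\widehat{V}_+ = V_+/V$. Then the images $[V_1], [V_2], [W_1^\perp \cap V_+], [W_2^\perp \cap V_+]$ are four lines in the 2-dimensional space $\widehat{V}_+$, and ${\rm cr}_k(V_1, W_1, W_2, V_2)$ equals the classical projective cross ratio ${\rm cr}_1^{\widehat{V}_+}([V_1], [W_1^\perp \cap V_+], [W_2^\perp \cap V_+], [V_2])$ on $\mathbb{P}(\widehat{V}_+) \simeq \mathbb{RP}^1$. -/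
open Matrix

/-- The classical projective cross ratio of four lines in a 2-dimensional space, in
terms of coordinate pairs of spanning vectors with respect to a fixed basis. -/
noncomputable def pcr (a b c d : ℝ × ℝ) : ℝ :=
  ((a.1 * c.2 - a.2 * c.1) * (d.1 * b.2 - d.2 * b.1)) /
    ((a.1 * b.2 - a.2 * b.1) * (d.1 * c.2 - d.2 * c.1))

/-! The wedge `V ∧ W^⊥` is the determinant of `[A | B]`, which is linear in the last column
of `A` and vanishes when that column lies in the span of the other columns. Since `W^⊥` is the
kernel of `Cᵀ Q`, of dimension `m`, a vector `w = V c + α v₁ + β v₂` of `W^⊥ ∩ V₊` is a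
combination of the columns of `B`, whence `α (V₁ ∧ W^⊥) + β (V₂ ∧ W^⊥) = 0`. The two relations
for `W₁` and `W₂` turn `cr_k` into `α₁ β₂ / (β₁ α₂)`, the cross ratio of the four lines. -/

namespace Matrix

section Det

variable {R : Type*} [CommRing R] {n : Type*} [Fintype n] [DecidableEq n]

theorem det_updateCol_mulVec (A : Matrix n n R) (j : n) (c : n → R) :
    (A.updateCol j (A *ᵥ c)).det = c j * A.det := by
  have hsum : A *ᵥ c = fun k ↦ ∑ i, c i • A k i := by
    funext k
    simp only [mulVec, dotProduct, smul_eq_mul, mul_comm]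
  rw [hsum, det_updateCol_sum, smul_eq_mul]

theorem det_updateCol_eq_zero_of_mem_span {M : Matrix n n R} {j : n} (hMj : ∀ i, M i j = 0)
    {w : n → R} (hw : w ∈ Submodule.span R (Set.range M.col)) : (M.updateCol j w).det = 0 := by
  obtain ⟨c, rfl⟩ : ∃ c, M *ᵥ c = w := by
    rwa [← range_mulVecLin, LinearMap.mem_range] at hw
  rw [det_updateCol_mulVec, det_eq_zero_of_column_eq_zero j hMj, mul_zero]

end Det

section SnocCol

variable {R : Type*} {n : Type*} {r : ℕ}

def snocCol (V : Matrix n (Fin r) R) (v : n → R) : Matrix n (Fin (r + 1)) R :=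
  of fun i j => if h : (j : ℕ) < r then V i ⟨j, h⟩ else v i

@[simp]
theorem snocCol_apply_last (V : Matrix n (Fin r) R) (v : n → R) (i : n) :
    V.snocCol v i (Fin.last r) = v i := by
  simp [snocCol]

theorem snocCol_eq_updateCol [Zero R] (V : Matrix n (Fin r) R) (v : n → R) :
    V.snocCol v = (V.snocCol 0).updateCol (Fin.last r) v := by
  ext i j
  rcases Fin.eq_castSucc_or_eq_last j with ⟨j, rfl⟩ | rfl
  · simp [snocCol, (Fin.castSucc_lt_last j).ne]
  · simp

theorem mulVec_mem_span_col_snocCol [CommSemiring R] [Fintype n] (V : Matrix n (Fin r) R)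
    (v : n → R) (c : Fin r → R) : V *ᵥ c ∈ Submodule.span R (Set.range (V.snocCol v).col) := by
  have hcols : Set.range V.col ⊆ Set.range (V.snocCol v).col := by
    rintro _ ⟨l, rfl⟩
    exact ⟨Fin.castSucc l, by ext; simp [snocCol]⟩
  refine Submodule.span_mono hcols ?_
  rw [← range_mulVecLin]
  exact ⟨c, rfl⟩

end SnocCol

section Kernel

variable {K : Type*} [Field K] {l m n : Type*} [Fintype m] [Fintype n]

theorem ker_mulVecLin_eq_span_col_of_mul_eq_zero {M : Matrix l m K} {B : Matrix m n K}
    (hMB : M * B = 0) (hB : LinearIndependent K B.col)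
    (hrank : M.rank + Fintype.card n = Fintype.card m) :
    LinearMap.ker M.mulVecLin = Submodule.span K (Set.range B.col) := by
  have hle : Submodule.span K (Set.range B.col) ≤ LinearMap.ker M.mulVecLin := by
    rw [← range_mulVecLin, LinearMap.range_le_ker_iff, ← mulVecLin_mul, hMB, mulVecLin_zero]
  have hker : Module.finrank K (LinearMap.ker M.mulVecLin) = Fintype.card n := by
    have := LinearMap.finrank_range_add_finrank_ker M.mulVecLin
    rw [← rank, Module.finrank_fintype_fun_eq_card] at this
    omega
  refine (Submodule.eq_of_le_of_finrank_le hle ?_).symm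
  rw [hker, finrank_span_eq_card hB]

theorem rank_transpose_mul_of_isUnit_det [DecidableEq m] {C : Matrix m n K} {Q : Matrix m m K}
    (hQ : IsUnit Q.det) (hC : LinearIndependent K C.col) : (Cᵀ * Q).rank = Fintype.card n := by
  rw [rank_mul_eq_left_of_isUnit_det Q Cᵀ hQ]
  exact LinearIndependent.rank_matrix (M := Cᵀ) hC

theorem mem_span_col_of_transpose_mul_mulVec_eq_zero [Fintype l] [DecidableEq m]
    {Q : Matrix m m K} (hQ : IsUnit Q.det) {C : Matrix m n K} (hC : LinearIndependent K C.col)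
    {B : Matrix m l K} (hB : LinearIndependent K B.col) (hcard : Fintype.card n + Fintype.card l = Fintype.card m)
    (hCB : Cᵀ * Q * B = 0) {w : m → K} (hw : Cᵀ *ᵥ (Q *ᵥ w) = 0) :
    w ∈ Submodule.span K (Set.range B.col) := by
  rw [← ker_mulVecLin_eq_span_col_of_mul_eq_zero hCB hB
    (by rw [rank_transpose_mul_of_isUnit_det hQ hC, hcard])]
  rwa [LinearMap.mem_ker, mulVecLin_apply, ← mulVec_mulVec]

end Kernel

end Matrix

section Wedge

variable {k m : ℕ}

theorem wedge_updateCol (A : Matrix (Fin (k + m)) (Fin k) ℝ)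
    (B : Matrix (Fin (k + m)) (Fin m) ℝ) (j : Fin k) (w : Fin (k + m) → ℝ) :
    wedge k m (A.updateCol j w) B =
      (((fromCols A B).submatrix id finSumFinEquiv.symm).updateCol (Fin.castAdd m j) w).det := by
  unfold wedge
  congr 1
  ext i l
  rcases hl : finSumFinEquiv.symm l with l' | l'
  · have : l = Fin.castAdd m l' := by rw [← finSumFinEquiv_apply_left, ← hl]; simp
    subst this
    simp [updateCol_apply]
  · have : l = Fin.natAdd k l' := by rw [← finSumFinEquiv_apply_right, ← hl]; simp
    subst this
    have := j.isLt
    simp [updateCol_apply, Fin.ext_iff]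
    omega

theorem wedge_updateCol_add (A : Matrix (Fin (k + m)) (Fin k) ℝ)
    (B : Matrix (Fin (k + m)) (Fin m) ℝ) (j : Fin k) (u v : Fin (k + m) → ℝ) :
    wedge k m (A.updateCol j (u + v)) B =
      wedge k m (A.updateCol j u) B + wedge k m (A.updateCol j v) B := by
  simp only [wedge_updateCol, det_updateCol_add]

theorem wedge_updateCol_smul (A : Matrix (Fin (k + m)) (Fin k) ℝ)
    (B : Matrix (Fin (k + m)) (Fin m) ℝ) (j : Fin k) (s : ℝ) (u : Fin (k + m) → ℝ) :
    wedge k m (A.updateCol j (s • u)) B = s * wedge k m (A.updateCol j u) B := by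
  simp only [wedge_updateCol, det_updateCol_smul]

theorem wedge_updateCol_eq_zero_of_mem_span {A : Matrix (Fin (k + m)) (Fin k) ℝ}
    {B : Matrix (Fin (k + m)) (Fin m) ℝ} {j : Fin k} (hAj : ∀ i, A i j = 0)
    {w : Fin (k + m) → ℝ} (hw : w ∈ Submodule.span ℝ (Set.range A.col ∪ Set.range B.col)) :
    wedge k m (A.updateCol j w) B = 0 := by
  set M := (fromCols A B).submatrix id finSumFinEquiv.symm
  have hcols : Set.range A.col ∪ Set.range B.col ⊆ Set.range M.col := by
    rintro _ (⟨l, rfl⟩ | ⟨l, rfl⟩)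
    · exact ⟨Fin.castAdd m l, by ext; simp [M]⟩
    · exact ⟨Fin.natAdd k l, by ext; simp [M]⟩
  rw [wedge_updateCol]
  exact det_updateCol_eq_zero_of_mem_span (by simpa [M] using hAj)
    (Submodule.span_mono hcols hw)

end Wedge

theorem wedge_snocCol_linear_relation {r m : ℕ} (V : Matrix (Fin (r + 1 + m)) (Fin r) ℝ)
    (B : Matrix (Fin (r + 1 + m)) (Fin m) ℝ) (v₁ v₂ : Fin (r + 1 + m) → ℝ) (c : Fin r → ℝ)
    (a b : ℝ) (hw : V *ᵥ c + a • v₁ + b • v₂ ∈ Submodule.span ℝ (Set.range B.col)) :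
    a * wedge (r + 1) m (V.snocCol v₁) B + b * wedge (r + 1) m (V.snocCol v₂) B = 0 := by
  have hlast : ∀ i, V.snocCol 0 i (Fin.last r) = 0 := fun i => V.snocCol_apply_last 0 i
  have hV : wedge (r + 1) m ((V.snocCol 0).updateCol (Fin.last r) (V *ᵥ c)) B = 0 :=
    wedge_updateCol_eq_zero_of_mem_span hlast
      (Submodule.span_mono Set.subset_union_left (V.mulVec_mem_span_col_snocCol 0 c))
  have hw' := wedge_updateCol_eq_zero_of_mem_span hlast
    (Submodule.span_mono Set.subset_union_right hw)
  rwa [wedge_updateCol_add, wedge_updateCol_add, hV, zero_add, wedge_updateCol_smul,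
    wedge_updateCol_smul, ← V.snocCol_eq_updateCol, ← V.snocCol_eq_updateCol] at hw'

theorem ne_zero_and_ne_zero_of_mul_add_mul_eq_zero {K : Type*} [Field K] {a b x y : K}
    (hx : x ≠ 0) (hy : y ≠ 0) (hab : (a, b) ≠ (0, 0)) (h : a * x + b * y = 0) :
    a ≠ 0 ∧ b ≠ 0 := by
  constructor <;> rintro rfl <;> simp_all

theorem div_mul_div_eq_pcr_of_linear_relations {x₁₁ x₁₂ x₂₁ x₂₂ a₁ b₁ a₂ b₂ : ℝ}
    (h₁₁ : x₁₁ ≠ 0) (h₁₂ : x₁₂ ≠ 0) (h₂₁ : x₂₁ ≠ 0) (h₂₂ : x₂₂ ≠ 0)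
    (hab₁ : (a₁, b₁) ≠ (0, 0)) (hab₂ : (a₂, b₂) ≠ (0, 0))
    (e₁ : a₁ * x₁₁ + b₁ * x₂₁ = 0) (e₂ : a₂ * x₁₂ + b₂ * x₂₂ = 0) :
    x₁₂ / x₁₁ * (x₂₁ / x₂₂) = pcr (1, 0) (a₁, b₁) (a₂, b₂) (0, 1) := by
  obtain ⟨ha₁, hb₁⟩ := ne_zero_and_ne_zero_of_mul_add_mul_eq_zero h₁₁ h₂₁ hab₁ e₁
  obtain ⟨ha₂, hb₂⟩ := ne_zero_and_ne_zero_of_mul_add_mul_eq_zero h₁₂ h₂₂ hab₂ e₂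
  rw [pcr, div_mul_div_comm, div_eq_div_iff (mul_ne_zero h₁₁ h₂₂) (by simp [ha₂, hb₁])]
  linear_combination (b₂ * x₂₂) * e₁ - (b₁ * x₂₁) * e₂

theorem stmt_19_general (r m : ℕ)
    (Qm : Matrix (Fin (r + 1 + m)) (Fin (r + 1 + m)) ℝ)
    (hQnd : IsUnit Qm.det)
    (V : Matrix (Fin (r + 1 + m)) (Fin r) ℝ) (v1 v2 : Fin (r + 1 + m) → ℝ)
    (A1 A2 : Matrix (Fin (r + 1 + m)) (Fin (r + 1)) ℝ)
    (hA1 : A1 = Matrix.of fun i (j : Fin (r + 1)) =>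
      if h : (j : ℕ) < r then V i ⟨(j : ℕ), h⟩ else v1 i)
    (hA2 : A2 = Matrix.of fun i (j : Fin (r + 1)) =>
      if h : (j : ℕ) < r then V i ⟨(j : ℕ), h⟩ else v2 i)
    (C1 C2 : Matrix (Fin (r + 1 + m)) (Fin (r + 1)) ℝ)
    (hC1i : colsIndep C1) (hC2i : colsIndep C2)
    (B1 B2 : Matrix (Fin (r + 1 + m)) (Fin m) ℝ)
    (hB1perp : C1ᵀ * Qm * B1 = 0) (hB2perp : C2ᵀ * Qm * B2 = 0)
    (hB1i : colsIndep B1) (hB2i : colsIndep B2)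
    (h11 : wedge (r + 1) m A1 B1 ≠ 0) (h12 : wedge (r + 1) m A1 B2 ≠ 0)
    (h21 : wedge (r + 1) m A2 B1 ≠ 0) (h22 : wedge (r + 1) m A2 B2 ≠ 0)
    (c1 c2 : Fin r → ℝ) (al1 be1 al2 be2 : ℝ)
    (w1 w2 : Fin (r + 1 + m) → ℝ)
    (hw1 : w1 = V *ᵥ c1 + al1 • v1 + be1 • v2)
    (hw2 : w2 = V *ᵥ c2 + al2 • v1 + be2 • v2)
    (hw1perp : C1ᵀ *ᵥ (Qm *ᵥ w1) = 0) (hw2perp : C2ᵀ *ᵥ (Qm *ᵥ w2) = 0)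
    (hw1ne : (al1, be1) ≠ (0, 0)) (hw2ne : (al2, be2) ≠ (0, 0)) :
    crk (r + 1) m A1 B1 B2 A2 = pcr (1, 0) (al1, be1) (al2, be2) (0, 1) := by
  have hcard : Fintype.card (Fin (r + 1)) + Fintype.card (Fin m) =
      Fintype.card (Fin (r + 1 + m)) := by
    simp
  have e1 := wedge_snocCol_linear_relation V B1 v1 v2 c1 al1 be1
    (hw1 ▸ mem_span_col_of_transpose_mul_mulVec_eq_zero hQnd hC1i hB1i hcard hB1perp hw1perp)
  have e2 := wedge_snocCol_linear_relation V B2 v1 v2 c2 al2 be2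
    (hw2 ▸ mem_span_col_of_transpose_mul_mulVec_eq_zero hQnd hC2i hB2i hcard hB2perp hw2perp)
  -- `snocCol V v` unfolds to the matrices of `hA1` and `hA2`.
  subst hA1 hA2
  exact div_mul_div_eq_pcr_of_linear_relations h11 h12 h21 h22 hw1ne hw2ne e1 e2

/-- Projection of the cross ratio: let `(V₁,W₁,W₂,V₂)` be a transverse quadruple of
isotropic `(r+1)`-planes with `dim (V₁ ∩ V₂) = r`; write `V₁ = V ⊕ ⟨v₁⟩`,
`V₂ = V ⊕ ⟨v₂⟩` with `V = V₁ ∩ V₂`, and for `j = 1,2` pick `w_j ∈ W_j^⊥ ∩ V₊`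
(`V₊ = V₁ + V₂`), `w_j = V c_j + α_j v₁ + β_j v₂` with `(α_j, β_j) ≠ 0`, so that in
`V̂₊ = V₊/V` (with basis `[v₁], [v₂]`) the four lines `[V₁], [W₁^⊥∩V₊], [W₂^⊥∩V₊], [V₂]`
have coordinates `(1,0), (α₁,β₁), (α₂,β₂), (0,1)`.  Then `cr_{r+1}(V₁,W₁,W₂,V₂)` equals
the classical projective cross ratio of these four lines in `ℙ(V̂₊) ≃ ℝℙ¹`. -/
theorem stmt_19 (r m : ℕ)
    (Qm : Matrix (Fin (r + 1 + m)) (Fin (r + 1 + m)) ℝ) (hQ : Qmᵀ = Qm)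
    (hQnd : IsUnit Qm.det)
    (V : Matrix (Fin (r + 1 + m)) (Fin r) ℝ) (v1 v2 : Fin (r + 1 + m) → ℝ)
    (hindep : LinearIndependent ℝ fun j : Fin (r + 2) => fun i : Fin (r + 1 + m) =>
      if h : (j : ℕ) < r then V i ⟨(j : ℕ), h⟩ else if (j : ℕ) = r then v1 i else v2 i)
    (A1 A2 : Matrix (Fin (r + 1 + m)) (Fin (r + 1)) ℝ)
    (hA1 : A1 = Matrix.of fun i (j : Fin (r + 1)) =>
      if h : (j : ℕ) < r then V i ⟨(j : ℕ), h⟩ else v1 i)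
    (hA2 : A2 = Matrix.of fun i (j : Fin (r + 1)) =>
      if h : (j : ℕ) < r then V i ⟨(j : ℕ), h⟩ else v2 i)
    (hA1iso : A1ᵀ * Qm * A1 = 0) (hA2iso : A2ᵀ * Qm * A2 = 0)
    (C1 C2 : Matrix (Fin (r + 1 + m)) (Fin (r + 1)) ℝ)
    (hC1iso : C1ᵀ * Qm * C1 = 0) (hC2iso : C2ᵀ * Qm * C2 = 0)
    (hC1i : colsIndep C1) (hC2i : colsIndep C2)
    (B1 B2 : Matrix (Fin (r + 1 + m)) (Fin m) ℝ)
    (hB1perp : C1ᵀ * Qm * B1 = 0) (hB2perp : C2ᵀ * Qm * B2 = 0)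
    (hB1i : colsIndep B1) (hB2i : colsIndep B2)
    (h11 : wedge (r + 1) m A1 B1 ≠ 0) (h12 : wedge (r + 1) m A1 B2 ≠ 0)
    (h21 : wedge (r + 1) m A2 B1 ≠ 0) (h22 : wedge (r + 1) m A2 B2 ≠ 0)
    (c1 c2 : Fin r → ℝ) (al1 be1 al2 be2 : ℝ)
    (w1 w2 : Fin (r + 1 + m) → ℝ)
    (hw1 : w1 = V *ᵥ c1 + al1 • v1 + be1 • v2)
    (hw2 : w2 = V *ᵥ c2 + al2 • v1 + be2 • v2)
    (hw1perp : C1ᵀ *ᵥ (Qm *ᵥ w1) = 0) (hw2perp : C2ᵀ *ᵥ (Qm *ᵥ w2) = 0)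
    (hw1ne : (al1, be1) ≠ (0, 0)) (hw2ne : (al2, be2) ≠ (0, 0)) :
    crk (r + 1) m A1 B1 B2 A2 = pcr (1, 0) (al1, be1) (al2, be2) (0, 1) :=
  stmt_19_general r m Qm hQnd V v1 v2 A1 A2 hA1 hA2 C1 C2 hC1i hC2i B1 B2 hB1perp hB2perp hB1i hB2i
    h11 h12 h21 h22 c1 c2 al1 be1 al2 be2 w1 w2 hw1 hw2 hw1perp hw2perp hw1ne hw2ne
end
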